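/- arXiv:math/0505341 — 3 statements merged into one kernel-verified Lean document; each statement's English description precedes it below -/
import Mathlib

section
/- Let K be a commutative ring, and suppose there is an element X ∈ K such that X² + X = 0 and K is generated as a ring by X (i.e., K = {m·1 + n·X : m, n ∈ ℤ}). If moreover there exist two ring homomorphisms ψ_g, ψ_b : K → ℤ with ψ_g(X) = -1 and ψ_b(X) = 0, then K is isomorphic as a ring to ℤ[T]/(T² + T). -/
/-!
Evaluation at `X` induces a surjection `ℤ[T]/(T² + T) → K`, since `K` is generated by `X`.
It is injective because a monic quotient `R[T]/(g)` embeds into `S` as soon as no nonzero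
polynomial of degree `< deg g` vanishes at the image of `T`; for `g = T² + T` such a polynomial
`a + bT` would, after applying `ψb` and `ψg`, have the two roots `0` and `-1` in `ℤ`.
-/

open Polynomial

theorem AdjoinRoot.lift_injective {R S : Type*} [CommRing R] [Nontrivial R] [CommRing S]
    {g : R[X]} (hg : g.Monic) {i : R →+* S} {x : S} (hx : g.eval₂ i x = 0)
    (hmin : ∀ p : R[X], p.degree < g.degree → p.eval₂ i x = 0 → p = 0) :
    Function.Injective (AdjoinRoot.lift i x hx) := by
  refine (injective_iff_map_eq_zero _).2 fun y hy => ?_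
  induction y using AdjoinRoot.induction_on with
  | ih p =>
    rw [AdjoinRoot.lift_mk] at hy
    rw [AdjoinRoot.mk_eq_zero, ← modByMonic_eq_zero_iff_dvd hg]
    refine hmin _ (degree_modByMonic_lt p hg) ?_
    rwa [eval₂_modByMonic_eq_self_of_root hx]

theorem Polynomial.eq_zero_of_degree_le_one_of_eval₂_eq_zero {K : Type*} [Ring K]
    (ψ₀ ψ₁ : K →+* ℤ) {x : K} (h₀ : ψ₀ x = 0) (h₁ : ψ₁ x = -1) {i : ℤ →+* K} {p : ℤ[X]}
    (hp : p.degree ≤ 1) (hpx : p.eval₂ i x = 0) : p = 0 := by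
  have hψ (ψ : K →+* ℤ) : p.eval (ψ x) = 0 := by
    rw [← map_zero ψ, ← hpx, hom_eval₂, Subsingleton.elim (ψ.comp i) (RingHom.id ℤ), eval]
  have hp0 : p.eval 0 = 0 := h₀ ▸ hψ ψ₀
  have hp1 : p.eval (-1) = 0 := h₁ ▸ hψ ψ₁
  rw [eq_X_add_C_of_degree_le_one hp] at hp0 hp1 ⊢
  simp only [eval_add, eval_mul, eval_C, eval_X, mul_zero, zero_add] at hp0 hp1
  have hp1' : p.coeff 1 = 0 := by linarith
  simp [hp0, hp1']

/-- If a commutative ring `K` is generated by an element `X` with `X² + X = 0`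
(every element is `m + n·X`), and there are ring homomorphisms `ψg, ψb : K → ℤ`
with `ψg(X) = -1` and `ψb(X) = 0`, then `K ≅ ℤ[T]/(T² + T)`. -/
theorem stmt3 {K : Type*} [CommRing K] (X : K)
    (hX : X ^ 2 + X = 0)
    (hgen : ∀ k : K, ∃ m n : ℤ, k = (m : K) + n • X)
    (ψg ψb : K →+* ℤ) (hg : ψg X = -1) (hb : ψb X = 0) :
    Nonempty (K ≃+* Polynomial ℤ ⧸ (Ideal.span {Polynomial.X ^ 2 + Polynomial.X} : Ideal (Polynomial ℤ))) := by
  set g : ℤ[X] := Polynomial.X ^ 2 + Polynomial.X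
  have hmonic : g.Monic := monic_X_pow_add (by simp)
  have hdeg : g.degree = 2 := by simp only [g]; compute_degree!
  have hroot : g.eval₂ (Int.castRingHom K) X = 0 := by simpa [g] using hX
  have hinj := AdjoinRoot.lift_injective hmonic hroot fun p hp =>
    eq_zero_of_degree_le_one_of_eval₂_eq_zero ψb ψg hb hg
      (by rw [hdeg] at hp; exact Order.le_of_lt_succ hp)
  have hsurj : Function.Surjective (AdjoinRoot.lift _ X hroot) := fun k => by
    obtain ⟨m, n, rfl⟩ := hgen k
    exact ⟨AdjoinRoot.of g m + n • AdjoinRoot.root g, by simp⟩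
  exact ⟨(RingEquiv.ofBijective _ ⟨hinj, hsurj⟩).symm⟩
end

section
/- Let G be an ordered divisible abelian group and f : (c, +∞) → (a, b) a function given piecewise by finitely many affine maps x ↦ qx + r with q, r rational coefficients (q·x meaning the ℚ-scalar action) on subintervals partitioning (c, +∞). Then the affine piece defined on the final unbounded subinterval must have slope q = 0; i.e., no injective such f can be strictly monotone on an unbounded final piece with image in a bounded interval. -/
open Set

instance PosSMulMono.rat_of_isOrderedAddMonoid {G : Type*} [AddCommGroup G] [LinearOrder G]
    [IsOrderedAddMonoid G] [Module ℚ G] : PosSMulMono ℚ G := by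
  refine .of_smul_nonneg fun q hq x hx => ?_
  have hden : (q.den : ℚ) • (q • x) = q.num • x := by
    rw [smul_smul, Rat.den_mul_eq_num, Int.cast_smul_eq_zsmul]
  rw [Nat.cast_smul_eq_nsmul] at hden
  have hnum : 0 ≤ q.num • x := zsmul_nonneg hx (Rat.num_nonneg.mpr hq)
  exact (nsmul_nonneg_iff q.den_ne_zero).mp (hden ▸ hnum)

/-- Between `x` and `x + |q|⁻¹ • (b - a)` the affine map moves by exactly `b - a`, too far for
both values to lie in `(a, b)`. -/
theorem eq_zero_of_forall_smul_add_mem_Ioo {𝕜 G : Type*} [Field 𝕜] [LinearOrder 𝕜]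
    [IsStrictOrderedRing 𝕜] [AddCommGroup G] [LinearOrder G] [IsOrderedAddMonoid G]
    [Module 𝕜 G] [PosSMulMono 𝕜 G] {q : 𝕜} {r a b s : G} (hab : a < b)
    (hmem : ∀ x, s < x → q • x + r ∈ Ioo a b) : q = 0 := by
  by_contra hq
  set d := b - a
  have hd : 0 < d := sub_pos.mpr hab
  set x := s + d
  set y := x + |q|⁻¹ • d
  have hsx : s < x := lt_add_of_pos_right s hd
  have hxy : x ≤ y := le_add_of_nonneg_right (smul_nonneg (by positivity) hd.le)
  have hx := hmem x hsx
  have hy := hmem y (hsx.trans_le hxy)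
  have hdiff : |(q • y + r) - (q • x + r)| = d := by
    rw [add_sub_add_right_eq_sub, ← smul_sub, add_sub_cancel_left, abs_smul, abs_smul, smul_smul,
      abs_inv, abs_abs, mul_inv_cancel₀ (abs_ne_zero.mpr hq), one_smul, abs_of_pos hd]
  have hlt : |(q • y + r) - (q • x + r)| < d :=
    abs_sub_lt_iff.2 ⟨sub_lt_sub hy.2 hx.1, sub_lt_sub hx.2 hy.1⟩
  exact hlt.ne hdiff

/-- In an ordered divisible abelian group (an ordered `ℚ`-vector space), if a function
`f : (c,∞) → (a,b)` into a bounded interval is affine, `f x = q • x + r` with `q ∈ ℚ`,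
on a final unbounded piece `(s,∞)`, then `q = 0`; i.e. the final affine piece cannot be
strictly monotone. -/
theorem stmt8 {G : Type*} [AddCommGroup G] [LinearOrder G] [IsOrderedAddMonoid G] [Module ℚ G]
    (a b c s : G) (hab : a < b) (hcs : c ≤ s)
    (f : G → G) (hmaps : ∀ x, c < x → f x ∈ Set.Ioo a b)
    (q : ℚ) (r : G) (haff : ∀ x, s < x → f x = q • x + r) :
    q = 0 :=
  eq_zero_of_forall_smul_add_mem_Ioo hab fun x hx => haff x hx ▸ hmaps x (hcs.trans_lt hx)
end

section
/- Let G be a dense linear order without endpoints and let a < b in G. For any partition of the closed interval [a, b] into finitely many points and open intervals, the number of points exceeds the number of open intervals by exactly 1 (i.e., the geometric Euler characteristic of [a,b] is 1). Similarly, for the open interval (a,b), the number of points is one less than the number of open intervals (Euler characteristic −1). -/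
/-!
Remove cells from the left. In a partition of `[a, b)` with `a < b`, the cell containing `a`
must be `{a}`, and the cell that starts at `a` on the right must be an interval `(a, d)`,
because every other cell stays away from some `(a, b')`. Removing both leaves a partition
of `[d, b)` with fewer cells and the same Euler characteristic, so every partition of a
half-open interval has Euler characteristic `0`. Removing `{b}` from a partition of `[a, b]`,
or `(a, d)` from a partition of `(a, b)`, leaves a partition of a half-open interval.
-/

open scoped Classical
open Set

section CellPartition

variable {G : Type*} [LinearOrder G]

def IsCell (S : Set G) : Prop :=
  (∃ x : G, S = {x}) ∨ ∃ c d : G, c < d ∧ S = Ioo c d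

structure IsCellPartition (𝒞 : Finset (Set G)) (s : Set G) : Prop where
  isCell : ∀ S ∈ 𝒞, IsCell S
  pairwise_disjoint : (𝒞 : Set (Set G)).Pairwise Disjoint
  sUnion_eq : ⋃₀ (𝒞 : Set (Set G)) = s

noncomputable def geomEulerChar (𝒞 : Finset (Set G)) : ℤ :=
  ((𝒞.filter fun S => ∃ x : G, S = {x}).card : ℤ) -
    ((𝒞.filter fun S => ∃ c d : G, c < d ∧ S = Ioo c d).card : ℤ)

theorem exists_disjoint_sUnion_Ioo {𝒟 : Finset (Set G)} {a b : G} (hab : a < b)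
    (h𝒟 : ∀ S ∈ 𝒟, ∃ b' ∈ Ioc a b, Disjoint S (Ioo a b')) :
    ∃ b' ∈ Ioc a b, Disjoint (⋃₀ (𝒟 : Set (Set G))) (Ioo a b') := by
  induction 𝒟 using Finset.induction_on with
  | empty => exact ⟨b, ⟨hab, le_rfl⟩, by simp⟩
  | insert S 𝒟 _ ih =>
    obtain ⟨b₁, hb₁, hS⟩ := h𝒟 S (Finset.mem_insert_self S 𝒟)
    obtain ⟨b₂, hb₂, h𝒟'⟩ := ih fun T hT => h𝒟 T (Finset.mem_insert_of_mem hT)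
    refine ⟨min b₁ b₂, ⟨lt_min hb₁.1 hb₂.1, (min_le_left _ _).trans hb₁.2⟩, ?_⟩
    rw [Finset.coe_insert, sUnion_insert, disjoint_union_left]
    exact ⟨hS.mono_right (Ioo_subset_Ioo_right (min_le_left _ _)),
      h𝒟'.mono_right (Ioo_subset_Ioo_right (min_le_right _ _))⟩

namespace IsCellPartition

variable {𝒞 : Finset (Set G)} {s : Set G}

theorem subset (h : IsCellPartition 𝒞 s) {S : Set G} (hS : S ∈ 𝒞) : S ⊆ s :=
  h.sUnion_eq ▸ subset_sUnion_of_mem (Finset.mem_coe.2 hS)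

theorem erase (h : IsCellPartition 𝒞 s) {S : Set G} (hS : S ∈ 𝒞) :
    IsCellPartition (𝒞.erase S) (s \ S) where
  isCell T hT := h.isCell T (Finset.mem_of_mem_erase hT)
  pairwise_disjoint := h.pairwise_disjoint.mono (Finset.coe_subset.2 (Finset.erase_subset S 𝒞))
  sUnion_eq := by
    ext x
    simp only [mem_sUnion, Finset.coe_erase, mem_sdiff, mem_singleton_iff, ← h.sUnion_eq]
    constructor
    · rintro ⟨T, ⟨hT, hTS⟩, hxT⟩
      exact ⟨⟨T, hT, hxT⟩, disjoint_left.1 (h.pairwise_disjoint hT hS hTS) hxT⟩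
    · rintro ⟨⟨T, hT, hxT⟩, hxS⟩
      exact ⟨T, ⟨hT, by rintro rfl; exact hxS hxT⟩, hxT⟩

theorem singleton_mem {x : G} (h : IsCellPartition 𝒞 s) (hx : x ∈ s)
    (hint : ∀ c d, c < x → x < d → ¬Ioo c d ⊆ s) : {x} ∈ 𝒞 := by
  rw [← h.sUnion_eq] at hx
  obtain ⟨S, hS, hxS⟩ := hx
  rcases h.isCell S hS with ⟨y, rfl⟩ | ⟨c, d, -, rfl⟩
  · rwa [mem_singleton_iff.1 hxS]
  · exact absurd (h.subset hS) (hint c d hxS.1 hxS.2)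

end IsCellPartition

section DenselyOrdered

variable [DenselyOrdered G]

theorem IsCell.nonempty {S : Set G} (hS : IsCell S) : S.Nonempty := by
  rcases hS with ⟨x, rfl⟩ | ⟨c, d, hcd, rfl⟩
  exacts [singleton_nonempty x, nonempty_Ioo.2 hcd]

theorem IsCell.eq_Ioo_or_disjoint_Ioo {S : Set G} {a b : G} (hS : IsCell S) (ha : a ∉ S)
    (hab : a < b) :
    (∃ d, a < d ∧ S = Ioo a d) ∨ ∃ b' ∈ Ioc a b, Disjoint S (Ioo a b') := by
  rcases hS with ⟨x, rfl⟩ | ⟨c, d, hcd, rfl⟩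
  · right
    rcases (Ne.symm ha).lt_or_gt with hxa | hax
    · exact ⟨b, ⟨hab, le_rfl⟩, disjoint_singleton_left.2 fun hx => hxa.not_gt hx.1⟩
    · exact ⟨min x b, ⟨lt_min hax hab, min_le_right x b⟩,
        disjoint_singleton_left.2 fun hx => hx.2.not_ge (min_le_left x b)⟩
  · rcases lt_trichotomy c a with hca | rfl | hac
    · have hda : d ≤ a := not_lt.1 fun had => ha ⟨hca, had⟩
      exact Or.inr ⟨b, ⟨hab, le_rfl⟩, Ioo_disjoint_Ioo.2 ((min_le_left _ _).trans
        (hda.trans (le_max_right _ _)))⟩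
    · exact Or.inl ⟨d, hcd, rfl⟩
    · exact Or.inr ⟨min c b, ⟨lt_min hac hab, min_le_right c b⟩, Ioo_disjoint_Ioo.2
        ((min_le_right _ _).trans ((min_le_left c b).trans (le_max_left _ _)))⟩

theorem Ioo_ne_singleton (c d x : G) : Ioo c d ≠ {x} :=
  fun h => not_covBy (Ioo_eq_singleton_iff.1 h).1

theorem geomEulerChar_erase_singleton {𝒞 : Finset (Set G)} {x : G} (hx : {x} ∈ 𝒞) :
    geomEulerChar 𝒞 = geomEulerChar (𝒞.erase {x}) + 1 := by
  have hnot : {x} ∉ 𝒞.filter fun S => ∃ c d : G, c < d ∧ S = Ioo c d := by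
    rintro hmem
    obtain ⟨c, d, -, h⟩ := (Finset.mem_filter.1 hmem).2
    exact Ioo_ne_singleton c d x h.symm
  have hmem : {x} ∈ 𝒞.filter fun S => ∃ y : G, S = {y} :=
    Finset.mem_filter.2 ⟨hx, x, rfl⟩
  have hcard := Finset.card_erase_add_one hmem
  rw [geomEulerChar, geomEulerChar, Finset.filter_erase, Finset.filter_erase,
    Finset.erase_eq_of_notMem hnot]
  omega

theorem geomEulerChar_erase_Ioo {𝒞 : Finset (Set G)} {c d : G} (hcd : c < d)
    (h : Ioo c d ∈ 𝒞) : geomEulerChar 𝒞 = geomEulerChar (𝒞.erase (Ioo c d)) - 1 := by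
  have hnot : Ioo c d ∉ 𝒞.filter fun S => ∃ x : G, S = {x} := by
    rintro hmem
    obtain ⟨x, hx⟩ := (Finset.mem_filter.1 hmem).2
    exact Ioo_ne_singleton c d x hx
  have hmem : Ioo c d ∈ 𝒞.filter fun S => ∃ c d : G, c < d ∧ S = Ioo c d :=
    Finset.mem_filter.2 ⟨h, c, d, hcd, rfl⟩
  have hcard := Finset.card_erase_add_one hmem
  rw [geomEulerChar, geomEulerChar, Finset.filter_erase, Finset.filter_erase,
    Finset.erase_eq_of_notMem hnot]
  omega

namespace IsCellPartition

variable {𝒞 : Finset (Set G)} {s : Set G}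

theorem eq_empty (h : IsCellPartition 𝒞 ∅) : 𝒞 = ∅ :=
  Finset.eq_empty_of_forall_notMem fun S hS =>
    ((h.isCell S hS).nonempty.mono (h.subset hS)).ne_empty rfl

theorem singleton_mem_of_isLeast {x : G} (h : IsCellPartition 𝒞 s) (hx : IsLeast s x) :
    {x} ∈ 𝒞 :=
  h.singleton_mem hx.1 fun _ _ hcx hxd hsub =>
    let ⟨_, hcy, hyx⟩ := exists_between hcx
    hyx.not_ge (hx.2 (hsub ⟨hcy, hyx.trans hxd⟩))

theorem singleton_mem_of_isGreatest {x : G} (h : IsCellPartition 𝒞 s) (hx : IsGreatest s x) :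
    {x} ∈ 𝒞 :=
  h.singleton_mem hx.1 fun _ _ hcx hxd hsub =>
    let ⟨_, hxy, hyd⟩ := exists_between hxd
    hxy.not_ge (hx.2 (hsub ⟨hcx.trans hxy, hyd⟩))

theorem exists_Ioo_mem {a b : G} (h : IsCellPartition 𝒞 s) (ha : a ∉ s) (hab : a < b)
    (hsub : Ioo a b ⊆ s) : ∃ d, a < d ∧ Ioo a d ∈ 𝒞 := by
  by_contra! hno
  have hfar : ∀ S ∈ 𝒞, ∃ b' ∈ Ioc a b, Disjoint S (Ioo a b') := fun S hS =>
    ((h.isCell S hS).eq_Ioo_or_disjoint_Ioo (fun haS => ha (h.subset hS haS)) hab).resolve_left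
      fun ⟨d, had, hSd⟩ => hno d had (hSd ▸ hS)
  obtain ⟨b', hb', hdisj⟩ := exists_disjoint_sUnion_Ioo hab hfar
  obtain ⟨y, hy⟩ := nonempty_Ioo.2 hb'.1
  rw [h.sUnion_eq] at hdisj
  exact disjoint_left.1 hdisj (hsub (Ioo_subset_Ioo_right hb'.2 hy)) hy

theorem exists_Ioo_mem_erase {a b : G} (h : IsCellPartition 𝒞 (Ioo a b)) (hab : a < b) :
    ∃ d, a < d ∧ Ioo a d ∈ 𝒞 ∧ IsCellPartition (𝒞.erase (Ioo a d)) (Ico d b) := by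
  obtain ⟨d, had, hd⟩ := h.exists_Ioo_mem left_notMem_Ioo hab subset_rfl
  have hdb : d ≤ b := ((Ioo_subset_Ioo_iff had).1 (h.subset hd)).2
  refine ⟨d, had, hd, ?_⟩
  convert h.erase hd using 1
  rw [← Ioo_union_Ico_eq_Ioo had hdb, union_sdiff_left,
    (disjoint_left.2 fun _ hx hx' => hx'.2.not_ge hx.1).sdiff_eq_left]

end IsCellPartition

theorem geomEulerChar_eq_zero_of_Ico {𝒞 : Finset (Set G)} {a b : G}
    (h : IsCellPartition 𝒞 (Ico a b)) : geomEulerChar 𝒞 = 0 := by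
  induction 𝒞 using Finset.strongInduction generalizing a with
  | H 𝒞 ih =>
  rcases le_or_gt b a with hba | hab
  · rw [Ico_eq_empty hba.not_gt] at h
    simp [h.eq_empty, geomEulerChar]
  · have ha : {a} ∈ 𝒞 := h.singleton_mem_of_isLeast (isLeast_Ico hab)
    have h₁ := h.erase ha
    rw [Ico_sdiff_left] at h₁
    obtain ⟨d, had, hd, h₂⟩ := h₁.exists_Ioo_mem_erase hab
    have hlt : (𝒞.erase {a}).erase (Ioo a d) ⊂ 𝒞 :=
      (Finset.erase_ssubset hd).trans (Finset.erase_ssubset ha)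
    rw [geomEulerChar_erase_singleton ha, geomEulerChar_erase_Ioo had hd, ih _ hlt h₂]
    norm_num

theorem geomEulerChar_eq_one_of_Icc {𝒞 : Finset (Set G)} {a b : G} (hab : a ≤ b)
    (h : IsCellPartition 𝒞 (Icc a b)) : geomEulerChar 𝒞 = 1 := by
  have hb : {b} ∈ 𝒞 := h.singleton_mem_of_isGreatest (isGreatest_Icc hab)
  have h' := h.erase hb
  rw [Icc_sdiff_right] at h'
  rw [geomEulerChar_erase_singleton hb, geomEulerChar_eq_zero_of_Ico h', zero_add]

theorem geomEulerChar_eq_neg_one_of_Ioo {𝒞 : Finset (Set G)} {a b : G} (hab : a < b)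
    (h : IsCellPartition 𝒞 (Ioo a b)) : geomEulerChar 𝒞 = -1 := by
  obtain ⟨d, had, hd, h'⟩ := h.exists_Ioo_mem_erase hab
  rw [geomEulerChar_erase_Ioo had hd, geomEulerChar_eq_zero_of_Ico h', zero_sub]

end DenselyOrdered

end CellPartition

theorem stmt16_general {G : Type*} [LinearOrder G] [DenselyOrdered G]
    (a b : G) (hab : a < b) :
    (∀ 𝒞 : Finset (Set G),
      (∀ S ∈ 𝒞, (∃ x : G, S = {x}) ∨ (∃ c d : G, c < d ∧ S = Set.Ioo c d)) →
      (𝒞 : Set (Set G)).Pairwise Disjoint →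
      ⋃₀ (𝒞 : Set (Set G)) = Set.Icc a b →
      ((𝒞.filter fun S => ∃ x : G, S = {x}).card : ℤ) -
        ((𝒞.filter fun S => ∃ c d : G, c < d ∧ S = Set.Ioo c d).card : ℤ) = 1) ∧
    (∀ 𝒞 : Finset (Set G),
      (∀ S ∈ 𝒞, (∃ x : G, S = {x}) ∨ (∃ c d : G, c < d ∧ S = Set.Ioo c d)) →
      (𝒞 : Set (Set G)).Pairwise Disjoint →
      ⋃₀ (𝒞 : Set (Set G)) = Set.Ioo a b →
      ((𝒞.filter fun S => ∃ x : G, S = {x}).card : ℤ) -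
        ((𝒞.filter fun S => ∃ c d : G, c < d ∧ S = Set.Ioo c d).card : ℤ) = -1) :=
  ⟨fun _ hcell hdisj hU => geomEulerChar_eq_one_of_Icc hab.le ⟨hcell, hdisj, hU⟩,
    fun _ hcell hdisj hU => geomEulerChar_eq_neg_one_of_Ioo hab ⟨hcell, hdisj, hU⟩⟩

/-- In a dense linear order without endpoints, for `a < b`: in any finite partition of
the closed interval `[a,b]` into cells (singletons and nonempty open intervals) the
number of singletons exceeds the number of intervals by exactly `1` (Euler
characteristic `1`), while for the open interval `(a,b)` it is one less (Euler
characteristic `-1`). -/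
theorem stmt16 {G : Type*} [LinearOrder G] [DenselyOrdered G] [NoMinOrder G] [NoMaxOrder G]
    (a b : G) (hab : a < b) :
    (∀ 𝒞 : Finset (Set G),
      (∀ S ∈ 𝒞, (∃ x : G, S = {x}) ∨ (∃ c d : G, c < d ∧ S = Set.Ioo c d)) →
      (𝒞 : Set (Set G)).Pairwise Disjoint →
      ⋃₀ (𝒞 : Set (Set G)) = Set.Icc a b →
      ((𝒞.filter fun S => ∃ x : G, S = {x}).card : ℤ) -
        ((𝒞.filter fun S => ∃ c d : G, c < d ∧ S = Set.Ioo c d).card : ℤ) = 1) ∧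
    (∀ 𝒞 : Finset (Set G),
      (∀ S ∈ 𝒞, (∃ x : G, S = {x}) ∨ (∃ c d : G, c < d ∧ S = Set.Ioo c d)) →
      (𝒞 : Set (Set G)).Pairwise Disjoint →
      ⋃₀ (𝒞 : Set (Set G)) = Set.Ioo a b →
      ((𝒞.filter fun S => ∃ x : G, S = {x}).card : ℤ) -
        ((𝒞.filter fun S => ∃ c d : G, c < d ∧ S = Set.Ioo c d).card : ℤ) = -1) :=
  stmt16_general a b hab
end
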